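/- arXiv:cs/0504090 — 3 statements merged into one kernel-verified Lean document; each statement's English description precedes it below -/
import Mathlib

section
/- A partial matching on a finite poset (the basis poset of a free chain complex) is acyclic (i.e., admits no alternating cycle d(b₁) ≺ b₁ ≻ d(b₂) ≺ b₂ ≻ ... ≻ d(bₙ) ≺ bₙ ≻ d(b₁) with n ≥ 2 and all bᵢ distinct) if and only if there exists a linear extension of the poset in which, for every matched pair (a, u(a)), the element u(a) follows directly after a. -/
/-!
If `ι` is a linear extension with `ι (u a) = ι a + 1`, then along an alternating cycle the
positions of the lower elements `ι (d bᵢ)` strictly decrease, which is impossible cyclically.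

Conversely, collapse every matched pair `(a, u a)` to `a`. A covering relation between
different collapsed elements either raises the rank or, staying in one rank, is a step
`a ⋖ u a ≻ b` read backwards; so a cycle among collapsed elements would be an alternating
cycle. Without one, the collapsed elements can be sorted compatibly with all covering
relations, and listing each `a` immediately followed by `u a` gives the linear extension.
-/

/-- A partial matching in the covering graph of a poset: a set of pairs `(a, b)` with
`b` covering `a`, all members of all pairs pairwise distinct. -/
def PosetMatching {α : Type} [PartialOrder α] (M : Finset (α × α)) : Prop :=
  (∀ p ∈ M, p.1 ⋖ p.2) ∧
  ∀ p ∈ M, ∀ q ∈ M, p ≠ q → p.1 ≠ q.1 ∧ p.1 ≠ q.2 ∧ p.2 ≠ q.1 ∧ p.2 ≠ q.2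

/-- An alternating cycle `d(b₁) ≺ b₁ ≻ d(b₂) ≺ b₂ ≻ ⋯ ≻ d(bₙ) ≺ bₙ ≻ d(b₁)` with
`n ≥ 2` and distinct matched pairs `(d(bᵢ), bᵢ) ∈ M` (the pair `f i` is `(d(bᵢ), bᵢ)`,
and `bᵢ ≻ d(bᵢ₊₁)` cyclically). -/
def PosetHasAltCycle {α : Type} [PartialOrder α] (M : Finset (α × α)) : Prop :=
  ∃ n : ℕ, ∃ f : Fin (n + 2) → α × α, Function.Injective f ∧
    (∀ i, f i ∈ M) ∧ ∀ i, (f (i + 1)).1 ⋖ (f i).2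

/-- `ι` is a linear extension of the finite partial order: an order-preserving
enumeration of its elements. -/
def IsLinearExtension {α : Type} [Fintype α] [PartialOrder α]
    (ι : α ≃ Fin (Fintype.card α)) : Prop :=
  ∀ x y : α, x ≤ y → ι x ≤ ι y

open Finset Function Relation

section Cycles

variable {α : Type*} {r : α → α → Prop}

theorem Relation.TransGen.exists_nat_path {a b : α} (h : TransGen r a b) :
    ∃ k, ∃ g : ℕ → α, g 0 = a ∧ g (k + 1) = b ∧ ∀ i ≤ k, r (g i) (g (i + 1)) := by
  induction h with
  | @single b hab =>
    exact ⟨0, fun i => if i = 0 then a else b, rfl, rfl, fun i hi => by simp_all⟩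
  | @tail c d _ hcd ih =>
    obtain ⟨k, g, hg0, hgk, hstep⟩ := ih
    refine ⟨k + 1, fun i => if i ≤ k + 1 then g i else d, by simp [hg0], by simp, fun i hi => ?_⟩
    rcases Nat.lt_or_eq_of_le hi with hi | rfl
    · simpa [hi.le, Nat.succ_le_of_lt hi] using hstep i (by omega)
    · simpa [hgk] using hcd

/-- A shortest closed walk visits no vertex twice. -/
theorem Relation.TransGen.exists_injective_cycle {a : α} (h : TransGen r a a) :
    ∃ n, ∃ g : Fin (n + 1) → α, Injective g ∧ ∀ i, r (g i) (g (i + 1)) := by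
  classical
  have hex : ∃ k, ∃ g : ℕ → α, g (k + 1) = g 0 ∧ ∀ i ≤ k, r (g i) (g (i + 1)) := by
    obtain ⟨k, g, hg0, hgk, hstep⟩ := h.exists_nat_path
    exact ⟨k, g, hgk.trans hg0.symm, hstep⟩
  obtain ⟨g, hclosed, hstep⟩ := Nat.find_spec hex
  have hinj : ∀ i j, i < j → j ≤ Nat.find hex → g i ≠ g j := by
    intro i j hij hj hgij
    refine Nat.find_min hex (m := j - i - 1) (by omega)
      ⟨fun t => g (i + t), ?_, fun t ht => hstep (i + t) (by omega)⟩
    show g (i + (j - i - 1 + 1)) = g (i + 0)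
    rw [show i + (j - i - 1 + 1) = j by omega, add_zero, hgij]
  refine ⟨Nat.find hex, fun i => g i, fun i j hij => Fin.ext ?_, fun i => ?_⟩
  · rcases lt_trichotomy (i : ℕ) j with h | h | h
    · exact absurd hij (hinj _ _ h (Nat.lt_succ_iff.mp j.isLt))
    · exact h
    · exact absurd hij.symm (hinj _ _ h (Nat.lt_succ_iff.mp i.isLt))
  · show r (g i) (g ((i + 1 : Fin _) : ℕ))
    rw [Fin.val_add_one]
    split_ifs with hi
    · simpa [hi, hclosed] using hstep (Nat.find hex) le_rfl
    · exact hstep i (Fin.val_lt_last hi).le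

/-- Counting the `r`-ancestors gives a height; a bijection with `Fin` breaks the ties. -/
theorem exists_injective_nat_of_acyclic [Fintype α] (hr : ∀ a, ¬TransGen r a a) :
    ∃ f : α → ℕ, Injective f ∧ ∀ a b, r a b → f a < f b := by
  classical
  let e := Fintype.equivFin α
  let height a := #{w | TransGen r w a}
  have hheight : ∀ a b, r a b → height a < height b := fun a b hab =>
    card_lt_card <| (ssubset_iff_of_subset fun w hw => by
      simp only [mem_filter, mem_univ, true_and] at hw ⊢; exact hw.tail hab).2
      ⟨a, by simpa using TransGen.single hab, by simpa using hr a⟩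
  refine ⟨fun a => Fintype.card α * height a + e a, fun a b hab => e.injective (Fin.ext ?_),
    fun a b hab => ?_⟩
  · simpa [Nat.mul_add_mod_of_lt (e a).isLt, Nat.mul_add_mod_of_lt (e b).isLt,
      Nat.mod_eq_of_lt (e a).isLt, Nat.mod_eq_of_lt (e b).isLt] using
      congrArg (· % Fintype.card α) hab
  · calc Fintype.card α * height a + e a < Fintype.card α * (height a + 1) := by
          rw [mul_add_one]; exact Nat.add_lt_add_left (e a).isLt _
      _ ≤ Fintype.card α * height b := Nat.mul_le_mul_left _ (hheight a b hab)
      _ ≤ _ := Nat.le_add_right _ _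

end Cycles

theorem exists_equiv_fin_of_injective {α β : Type*} [Fintype α] [LinearOrder β] {key : α → β}
    (hkey : Injective key) :
    ∃ ι : α ≃ Fin (Fintype.card α), (∀ x y, key x ≤ key y → ι x ≤ ι y) ∧
      ∀ x y, key x ⋖ key y → (ι y : ℕ) = ι x + 1 := by
  classical
  let below x : Finset α := {y | key y < key x}
  have hlt : ∀ x y, key x < key y → #(below x) < #(below y) := fun x y h =>
    card_lt_card <| (ssubset_iff_of_subset fun z hz => by
      simp only [below, mem_filter, mem_univ, true_and] at hz ⊢; exact hz.trans h).2
      ⟨x, by simpa [below] using h, by simp [below]⟩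
  let ι₀ x : Fin (Fintype.card α) := ⟨#(below x), card_lt_univ_of_notMem (x := x) (by simp [below])⟩
  have hle : ∀ x y, key x ≤ key y → ι₀ x ≤ ι₀ y := fun x y h =>
    h.eq_or_lt.elim (fun h => hkey h ▸ le_rfl) fun h => Fin.le_def.mpr (hlt x y h).le
  have hinj : Injective ι₀ := fun x y hxy => by
    by_contra hne
    rcases lt_or_gt_of_ne (hkey.ne hne) with h | h
    · exact (hlt x y h).ne (congrArg Fin.val hxy)
    · exact (hlt y x h).ne (congrArg Fin.val hxy).symm
  refine ⟨Equiv.ofBijective ι₀ ((Fintype.bijective_iff_injective_and_card ι₀).2 ⟨hinj, by simp⟩),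
    hle, fun x y hxy => ?_⟩
  have hbelow : below y = insert x (below x) := by
    ext z
    simp only [below, mem_filter, mem_univ, true_and, mem_insert]
    refine ⟨fun hz => (hxy.le_of_lt hz).eq_or_lt.imp_left (hkey ·), ?_⟩
    rintro (rfl | hz)
    exacts [hxy.lt, hz.trans hxy.lt]
  change #(below y) = #(below x) + 1
  rw [hbelow, card_insert_of_notMem (by simp [below])]

section Matching

variable {α : Type} {M : Finset (α × α)}

def IsMatchedTop (M : Finset (α × α)) (x : α) : Prop := ∃ p ∈ M, p.2 = x

/-- Collapses each matched pair `(a, u a)` to `a`. -/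
noncomputable def matchBottom (M : Finset (α × α)) (x : α) : α :=
  open Classical in if h : IsMatchedTop M x then h.choose.1 else x

theorem matchBottom_of_not_isMatchedTop {x : α} (h : ¬IsMatchedTop M x) : matchBottom M x = x := by
  simp [matchBottom, h]

variable [PartialOrder α]

/-- The step `a ⋖ u a ≻ b` of an alternating path. -/
def AltStep (M : Finset (α × α)) (a b : α) : Prop := a ≠ b ∧ ∃ p ∈ M, p.1 = a ∧ b ⋖ p.2

theorem posetHasAltCycle_of_transGen_altStep {a : α} (h : TransGen (AltStep M) a a) :
    PosetHasAltCycle M := by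
  obtain ⟨n, g, hg, hstep⟩ := h.exists_injective_cycle
  choose hne p hpM hp1 hp2 using hstep
  cases n with
  | zero => exact (hne 0 (congrArg g (by decide))).elim
  | succ n =>
    exact ⟨n, p, fun i j hij => hg (by rw [← hp1 i, ← hp1 j, hij]), hpM,
      fun i => hp1 (i + 1) ▸ hp2 i⟩

namespace PosetMatching

variable (hM : PosetMatching M)
include hM

theorem eq_of_fst_eq {p q : α × α} (hp : p ∈ M) (hq : q ∈ M) (h : p.1 = q.1) : p = q := by
  by_contra hne
  exact (hM.2 p hp q hq hne).1 h

theorem eq_of_snd_eq {p q : α × α} (hp : p ∈ M) (hq : q ∈ M) (h : p.2 = q.2) : p = q := by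
  by_contra hne
  exact (hM.2 p hp q hq hne).2.2.2 h

theorem not_isMatchedTop_fst {p : α × α} (hp : p ∈ M) : ¬IsMatchedTop M p.1 := by
  rintro ⟨q, hq, hqp⟩
  by_cases hpq : p = q
  · rw [← hpq] at hqp
    exact (hM.1 p hp).ne hqp.symm
  · exact (hM.2 p hp q hq hpq).2.1 hqp.symm

theorem matchBottom_snd {p : α × α} (hp : p ∈ M) : matchBottom M p.2 = p.1 := by
  have h : IsMatchedTop M p.2 := ⟨p, hp, rfl⟩
  rw [matchBottom, dif_pos h, hM.eq_of_snd_eq h.choose_spec.1 hp h.choose_spec.2]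

theorem matchBottom_fst {p : α × α} (hp : p ∈ M) : matchBottom M p.1 = p.1 :=
  matchBottom_of_not_isMatchedTop (hM.not_isMatchedTop_fst hp)

theorem eq_of_matchBottom_eq {x y : α} (h : matchBottom M x = matchBottom M y)
    (htop : IsMatchedTop M x ↔ IsMatchedTop M y) : x = y := by
  by_cases hx : IsMatchedTop M x
  · obtain ⟨p, hp, rfl⟩ := hx
    obtain ⟨q, hq, rfl⟩ := htop.mp ⟨p, hp, rfl⟩
    rw [hM.matchBottom_snd hp, hM.matchBottom_snd hq] at h
    rw [hM.eq_of_fst_eq hp hq h]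
  · rwa [matchBottom_of_not_isMatchedTop hx, matchBottom_of_not_isMatchedTop (htop.not.mp hx)] at h

theorem mem_of_covBy_of_matchBottom_eq {x y : α} (hxy : x ⋖ y)
    (h : matchBottom M x = matchBottom M y) : (x, y) ∈ M := by
  by_cases hx : IsMatchedTop M x
  · obtain ⟨p, hp, rfl⟩ := hx
    rw [hM.matchBottom_snd hp] at h
    by_cases hy : IsMatchedTop M y
    · obtain ⟨q, hq, rfl⟩ := hy
      rw [hM.matchBottom_snd hq] at h
      exact absurd (hM.eq_of_fst_eq hp hq h ▸ hxy) (lt_irrefl _ ∘ CovBy.lt)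
    · rw [matchBottom_of_not_isMatchedTop hy] at h
      exact absurd (h ▸ (hM.1 p hp).lt.trans hxy.lt) (lt_irrefl _)
  · rw [matchBottom_of_not_isMatchedTop hx] at h
    by_cases hy : IsMatchedTop M y
    · obtain ⟨q, hq, rfl⟩ := hy
      rw [hM.matchBottom_snd hq] at h
      exact h ▸ hq
    · exact absurd (h.trans (matchBottom_of_not_isMatchedTop hy)) hxy.ne

section Rank

variable {rk : α → ℕ} (hrk : ∀ a b : α, a ⋖ b → rk b = rk a + 1)
include hrk

theorem rank_eq_of_altStep {a b : α} (h : AltStep M a b) : rk a = rk b := by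
  obtain ⟨-, p, hp, rfl, hb⟩ := h
  have := hrk _ _ (hM.1 p hp)
  have := hrk _ _ hb
  omega

theorem rank_lt_or_altStep_of_covBy {x y : α} (hxy : x ⋖ y)
    (hne : matchBottom M x ≠ matchBottom M y) :
    rk (matchBottom M x) < rk (matchBottom M y) ∨
      AltStep M (matchBottom M y) (matchBottom M x) := by
  have hbottom : ∀ z, rk (matchBottom M z) + 1 = rk z ∨ matchBottom M z = z := fun z => by
    by_cases hz : IsMatchedTop M z
    · obtain ⟨p, hp, rfl⟩ := hz
      exact .inl (hM.matchBottom_snd hp ▸ (hrk _ _ (hM.1 p hp)).symm)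
    · exact .inr (matchBottom_of_not_isMatchedTop hz)
  have hxy' := hrk _ _ hxy
  by_cases hy : IsMatchedTop M y
  · obtain ⟨p, hp, rfl⟩ := hy
    have hp' := hrk _ _ (hM.1 p hp)
    rw [hM.matchBottom_snd hp] at hne ⊢
    rcases hbottom x with hx | hx
    · left; omega
    · rw [hx] at hne ⊢
      exact .inr ⟨hne.symm, p, hp, rfl, hxy⟩
  · rw [matchBottom_of_not_isMatchedTop hy]
    rcases hbottom x with hx | hx
    · left; omega
    · left; rw [hx]; omega

theorem transGen_rank_lt_or_altStep {u v : α}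
    (h : TransGen (fun u v => rk u < rk v ∨ AltStep M v u) u v) :
    rk u < rk v ∨ rk u = rk v ∧ TransGen (AltStep M) v u := by
  induction h with
  | single huv =>
    exact huv.imp_right fun h => ⟨(hM.rank_eq_of_altStep hrk h).symm, .single h⟩
  | tail _ hvw ih =>
    rcases hvw with hvw | hvw <;> rcases ih with ih | ih
    · exact .inl (ih.trans hvw)
    · exact .inl (ih.1.trans_lt hvw)
    · exact .inl (ih.trans_eq (hM.rank_eq_of_altStep hrk hvw).symm)
    · exact .inr ⟨ih.1.trans (hM.rank_eq_of_altStep hrk hvw).symm, .head hvw ih.2⟩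

/-- `a` and `u a` get the keys `2 f(a)` and `2 f(a) + 1`, where `f` orders the collapsed
elements by rank and, within a rank, against alternating steps. -/
theorem exists_injective_monotone_key [Fintype α] (hacyc : ¬PosetHasAltCycle M) :
    ∃ key : α → ℕ, Injective key ∧ Monotone key ∧ ∀ p ∈ M, key p.2 = key p.1 + 1 := by
  classical
  obtain ⟨f, hf, hlt⟩ := exists_injective_nat_of_acyclic
    (r := fun u v => rk u < rk v ∨ AltStep M v u) fun u hu =>
      (hM.transGen_rank_lt_or_altStep hrk hu).elim (lt_irrefl _)
        fun h => hacyc (posetHasAltCycle_of_transGen_altStep h.2)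
  let top x : ℕ := if IsMatchedTop M x then 1 else 0
  have hpair : ∀ p ∈ M, 2 * f (matchBottom M p.2) + top p.2 =
      2 * f (matchBottom M p.1) + top p.1 + 1 := fun p hp => by
    simp [top, hM.matchBottom_snd hp, hM.matchBottom_fst hp, hM.not_isMatchedTop_fst hp,
      show IsMatchedTop M p.2 from ⟨p, hp, rfl⟩]
  let _ := Fintype.toLocallyFiniteOrder (α := α)
  refine ⟨fun x => 2 * f (matchBottom M x) + top x, fun x y hxy => ?_,
    (monotone_iff_forall_covBy _).2 fun x y hxy => ?_, hpair⟩
  · simp only at hxy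
    have hfxy : f (matchBottom M x) = f (matchBottom M y) := by
      simp only [top] at hxy; split_ifs at hxy <;> omega
    have htop : top x = top y := by omega
    refine hM.eq_of_matchBottom_eq (hf hfxy) ?_
    by_cases hx : IsMatchedTop M x <;> by_cases hy : IsMatchedTop M y <;>
      simp [top, hx, hy] at htop ⊢
  · by_cases hq : matchBottom M x = matchBottom M y
    · exact (hpair _ (hM.mem_of_covBy_of_matchBottom_eq hxy hq)).symm ▸ Nat.le_succ _
    · have := hlt _ _ (hM.rank_lt_or_altStep_of_covBy hrk hxy hq)
      simp only [top]; split_ifs <;> omega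

end Rank

theorem not_posetHasAltCycle_of_isLinearExtension [Fintype α]
    (ι : α ≃ Fin (Fintype.card α)) (hι : IsLinearExtension ι)
    (hpair : ∀ p ∈ M, (ι p.2 : ℕ) = ι p.1 + 1) :
    ¬PosetHasAltCycle M := by
  rintro ⟨n, f, hf, hfM, hcov⟩
  have hstrict : StrictMono ι :=
    Monotone.strictMono_of_injective (fun x y => hι x y) ι.injective
  obtain ⟨i, hi⟩ := Finite.exists_min fun i => ι (f i).1
  have hne : (f (i + 1)).1 ≠ (f i).1 :=
    (hM.2 _ (hfM _) _ (hfM i) (hf.ne (by simp))).1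
  have hlt : (ι (f (i + 1)).1 : ℕ) < ι (f i).2 := hstrict (hcov i).lt
  have hmin := hi (i + 1)
  have hsucc := hpair _ (hfM i)
  exact ι.injective.ne hne (Fin.ext (by omega))

end PosetMatching

end Matching

theorem acyclic_iff_linear_extension_general {α : Type} [Fintype α]
    [PartialOrder α] (rk : α → ℕ) (hrk : ∀ a b : α, a ⋖ b → rk b = rk a + 1)
    (M : Finset (α × α)) (hM : PosetMatching M) :
    ¬ PosetHasAltCycle M ↔
      ∃ ι : α ≃ Fin (Fintype.card α), IsLinearExtension ι ∧
        ∀ p ∈ M, (ι p.2 : ℕ) = (ι p.1 : ℕ) + 1 := by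
  refine ⟨fun hacyc => ?_, fun ⟨ι, hι, hpair⟩ =>
    hM.not_posetHasAltCycle_of_isLinearExtension ι hι hpair⟩
  obtain ⟨key, hinj, hmono, hkey⟩ := hM.exists_injective_monotone_key hrk hacyc
  obtain ⟨ι, hle, hsucc⟩ := exists_equiv_fin_of_injective hinj
  exact ⟨ι, fun x y hxy => hle x y (hmono hxy),
    fun p hp => hsucc _ _ (hkey p hp ▸ Order.covBy_add_one _)⟩

/-- A partial matching on a finite ranked poset is acyclic (admits no alternating
cycle) if and only if there is a linear extension of the poset in which, for every
matched pair `(a, u(a))`, the element `u(a)` follows directly after `a`. -/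
theorem acyclic_iff_linear_extension {α : Type} [Fintype α] [DecidableEq α]
    [PartialOrder α] (rk : α → ℕ) (hrk : ∀ a b : α, a ⋖ b → rk b = rk a + 1)
    (M : Finset (α × α)) (hM : PosetMatching M) :
    ¬ PosetHasAltCycle M ↔
      ∃ ι : α ≃ Fin (Fintype.card α), IsLinearExtension ι ∧
        ∀ p ∈ M, (ι p.2 : ℕ) = (ι p.1 : ℕ) + 1 :=
  acyclic_iff_linear_extension_general rk hrk M hM
end

section
/- After the basis change a'_k := ∂b_k, x' := x − w(x ≻ a_k)·b_k (for x ∉ {a_k, b_k}, with w(b_k ≻ a_k) = 1), the new weights satisfy: (1) w(x' ≻ b'_k) = 0 and w(b'_k ≻ x') = 0 for x ≠ a_k; (2) w(a'_k ≻ x') = 0 and w(x' ≻ a'_k) = 0 for x ≠ b_k; (3) w(x' ≻ y') = w(x ≻ y) − w(x ≻ a_k)·w(b_k ≻ y) for x ≠ b_k, y ≠ a_k of consecutive dimensions. -/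
open Finset

universe u

/-- A free chain complex with a chosen basis: basis elements `B` graded by `dim`,
finitely many in each degree, with differential determined by the weights
`w b a` (the coefficient of `a` in `∂ b`), supported in consecutive degrees
and squaring to zero. -/
structure BasedComplex (R : Type u) [CommRing R] : Type (u + 1) where
  B : Type u
  [deceq : DecidableEq B]
  dim : B → ℤ
  [fin : ∀ n : ℤ, Fintype {b : B // dim b = n}]
  w : B → B → R
  w_dim : ∀ b a, w b a ≠ 0 → dim a = dim b - 1
  dsq : ∀ b z : B, (∑ y : {y : B // dim y = dim b - 1}, w b (y : B) * w (y : B) z) = 0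

attribute [instance] BasedComplex.deceq BasedComplex.fin

variable {R : Type u} [CommRing R]

/-- The chain complex is bounded on the right (degrees bounded below). -/
def BasedComplex.BoundedBelow (C : BasedComplex R) : Prop :=
  ∃ N : ℤ, ∀ b : C.B, N ≤ C.dim b

/-- A partial matching on the basis: a set of pairs `(a, b)` with `b` of one higher
degree, invertible weight `w b a`, and all members of all pairs pairwise distinct. -/
def IsMatching (C : BasedComplex R) (M : Set (C.B × C.B)) : Prop :=
  (∀ p ∈ M, C.dim p.2 = C.dim p.1 + 1 ∧ IsUnit (C.w p.2 p.1)) ∧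
  (∀ p ∈ M, ∀ q ∈ M, p ≠ q → p.1 ≠ q.1 ∧ p.1 ≠ q.2 ∧ p.2 ≠ q.1 ∧ p.2 ≠ q.2)

/-- A basis element is critical if it appears in no matched pair. -/
def IsCritical (C : BasedComplex R) (M : Set (C.B × C.B)) (x : C.B) : Prop :=
  ∀ p ∈ M, p.1 ≠ x ∧ p.2 ≠ x

/-- Existence of an alternating cycle `d(b₁) ≺ b₁ ≻ d(b₂) ≺ ⋯ ≺ bₙ ≻ d(b₁)`,
`n ≥ 2`, with distinct matched pairs `(d(bᵢ), bᵢ) ∈ M`, with respect to a weight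
function `w` (nonzero weight plays the role of the covering relation). -/
def HasAltCycleW {B : Type u} (w : B → B → R) (M : Set (B × B)) : Prop :=
  ∃ n : ℕ, ∃ f : Fin (n + 2) → B × B, Function.Injective f ∧
    (∀ i, f i ∈ M) ∧ ∀ i, w (f i).2 (f (i + 1)).1 ≠ 0

/-- An acyclic matching: a partial matching admitting no alternating cycle. -/
def IsAcyclicMatching (C : BasedComplex R) (M : Set (C.B × C.B)) : Prop :=
  IsMatching C M ∧ ¬ HasAltCycleW C.w M

/-- The weight of an alternating path `s ≻ a₁ ≺ b₁ ≻ a₂ ≺ b₂ ≻ ⋯ ≺ bₙ ≻ t`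
(encoded by its list of intermediate matched pairs `(aᵢ, bᵢ)`), namely
`(-1)ⁿ ∏ w(down-edges) / ∏ w(matching edges)`. -/
noncomputable def pathWeightW {B : Type u} (w : B → B → R) : B → List (B × B) → B → R
  | s, [], t => w s t
  | s, p :: L, t => -(w s p.1) * Ring.inverse (w p.2 p.1) * pathWeightW w p.2 L t

open Classical in
/-- The Morse-differential coefficient from `s` to `t`: the sum of the weights of all
alternating paths from `s` to `t` whose intermediate pairs are distinct members of `M`
(paths through pairs of the wrong degrees have weight `0`). -/
noncomputable def morseCoeffW (C : BasedComplex R) (w' : C.B → C.B → R)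
    (M : Set (C.B × C.B)) (s t : C.B) : R :=
  ∑ k ∈ Finset.range
      (Fintype.card ({a : C.B // C.dim a = C.dim s - 1} × {b : C.B // C.dim b = C.dim s}) + 1),
    ∑ f : Fin k → {a : C.B // C.dim a = C.dim s - 1} × {b : C.B // C.dim b = C.dim s},
      if Function.Injective f ∧ ∀ i, (((f i).1 : C.B), ((f i).2 : C.B)) ∈ M then
        pathWeightW w' s (List.ofFn fun i => (((f i).1 : C.B), ((f i).2 : C.B))) t
      else 0

/-- The Morse-differential coefficient `∑_p w(p)` with the weights of `C` itself. -/
noncomputable def morseCoeff (C : BasedComplex R) (M : Set (C.B × C.B)) (s t : C.B) : R :=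
  morseCoeffW C C.w M s t
/-- The boundary operator on chains (finitely supported combinations of basis elements). -/
noncomputable def BasedComplex.bd (C : BasedComplex R) : (C.B →₀ R) →ₗ[R] (C.B →₀ R) :=
  Finsupp.lsum R fun b => LinearMap.toSpanSingleton R _
    (∑ a : {a : C.B // C.dim a = C.dim b - 1}, Finsupp.single (a : C.B) (C.w b (a : C.B)))

/-- The submodule of chains of degree `n`. -/
def BasedComplex.deg (C : BasedComplex R) (n : ℤ) : Submodule R (C.B →₀ R) :=
  Finsupp.supported R R {b | C.dim b = n}

/-!
The coordinate functionals of the new basis are explicit: the `a'`-coordinate of a chain `f`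
is `f a`, its `b'`-coordinate is `(∂f) a`, and its `x'`-coordinate is `f x - w(b ≻ x) * f a`;
each formula is checked on the basis `v` itself. The new weights then follow by evaluating
these functionals on `∂ v x`, together with `∂ ∘ ∂ = 0`.
-/

namespace BasedComplex

variable (C : BasedComplex R)

theorem bd_single (x : C.B) (r : R) :
    C.bd (Finsupp.single x r) =
      ∑ y : {y : C.B // C.dim y = C.dim x - 1}, Finsupp.single (y : C.B) (r * C.w x y) := by
  simp [bd, Finset.smul_sum, Finsupp.smul_single]

theorem bd_single_apply (x t : C.B) (r : R) : C.bd (Finsupp.single x r) t = r * C.w x t := by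
  rw [bd_single, Finsupp.finsetSum_apply]
  by_cases ht : C.dim t = C.dim x - 1
  · refine (Finset.sum_eq_single_of_mem (⟨t, ht⟩ : {y : C.B // C.dim y = C.dim x - 1})
      (Finset.mem_univ _) fun y _ hy => ?_).trans Finsupp.single_eq_same
    exact Finsupp.single_eq_of_ne fun h => hy (Subtype.ext h.symm)
  · rw [Finset.sum_eq_zero fun (y : {y : C.B // C.dim y = C.dim x - 1}) _ =>
        Finsupp.single_eq_of_ne fun (h : t = y) => ht (h ▸ y.2),
      not_not.mp (mt (C.w_dim x t) ht), mul_zero]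

theorem bd_bd (f : C.B →₀ R) : C.bd (C.bd f) = 0 := by
  suffices C.bd ∘ₗ C.bd = 0 from LinearMap.congr_fun this f
  refine Finsupp.lhom_ext fun x r => Finsupp.ext fun t => ?_
  rw [LinearMap.comp_apply, bd_single, map_sum, Finsupp.finsetSum_apply]
  simp only [bd_single_apply, mul_assoc, ← Finset.mul_sum, C.dsq x t, mul_zero,
    LinearMap.zero_apply, Finsupp.coe_zero, Pi.zero_apply]

structure IsBasisChangeAt (a b : C.B) (v : Module.Basis C.B R (C.B →₀ R)) : Prop where
  apply_fst : v a = C.bd (Finsupp.single b 1)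
  apply_snd : v b = Finsupp.single b 1
  apply_of_ne : ∀ x, x ≠ a → x ≠ b → v x = Finsupp.single x 1 - C.w x a • Finsupp.single b 1

namespace IsBasisChangeAt

variable {C} {a b : C.B} {v : Module.Basis C.B R (C.B →₀ R)}

theorem repr_apply_fst (hv : C.IsBasisChangeAt a b v) (hw : C.w b a = 1) (hab : a ≠ b)
    (f : C.B →₀ R) : v.repr f a = f a := by
  suffices v.coord a = Finsupp.lapply a from LinearMap.congr_fun this f
  refine v.ext fun z => ?_
  rw [Module.Basis.coord_apply, v.repr_self, Finsupp.lapply_apply]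
  by_cases hza : z = a
  · subst hza; simp [hv.apply_fst, bd_single_apply, hw]
  by_cases hzb : z = b
  · subst hzb; simp [hv.apply_snd, Finsupp.single_eq_of_ne hab]
  · simp [hv.apply_of_ne z hza hzb, Finsupp.single_eq_of_ne hab]

theorem repr_apply_snd (hv : C.IsBasisChangeAt a b v) (hw : C.w b a = 1) (hab : a ≠ b)
    (f : C.B →₀ R) : v.repr f b = C.bd f a := by
  suffices v.coord b = Finsupp.lapply a ∘ₗ C.bd from LinearMap.congr_fun this f
  refine v.ext fun z => ?_
  rw [Module.Basis.coord_apply, v.repr_self, LinearMap.comp_apply, Finsupp.lapply_apply]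
  by_cases hza : z = a
  · subst hza; simp [hv.apply_fst, bd_bd, Finsupp.single_eq_of_ne (Ne.symm hab)]
  by_cases hzb : z = b
  · subst hzb; simp [hv.apply_snd, bd_single_apply, hw]
  · simp [hv.apply_of_ne z hza hzb, bd_single_apply, hw, Finsupp.single_eq_of_ne (Ne.symm hzb)]

theorem repr_apply_of_ne (hv : C.IsBasisChangeAt a b v) (hw : C.w b a = 1) (hab : a ≠ b)
    {y : C.B} (hya : y ≠ a) (hyb : y ≠ b) (f : C.B →₀ R) :
    v.repr f y = f y - C.w b y * f a := by
  suffices v.coord y = Finsupp.lapply y - C.w b y • Finsupp.lapply a from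
    LinearMap.congr_fun this f
  refine v.ext fun z => ?_
  rw [Module.Basis.coord_apply, v.repr_self]
  by_cases hza : z = a
  · subst hza; simp [hv.apply_fst, bd_single_apply, hw, Finsupp.single_eq_of_ne hya]
  by_cases hzb : z = b
  · subst hzb; simp [hv.apply_snd, hyb, Finsupp.single_eq_of_ne hab]
  · simp [hv.apply_of_ne z hza hzb, Finsupp.single_eq_of_ne hyb, Finsupp.single_eq_of_ne hab,
      Finsupp.single_eq_of_ne (Ne.symm hza)]

end IsBasisChangeAt

end BasedComplex

/-- After the basis change `a' = ∂b`, `b' = b`, `x' = x − w(x ≻ a) • b`, the new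
weights (coefficients of the differential in the new basis `v`) satisfy:
(1) `w(x' ≻ b') = 0` and `w(b' ≻ x') = 0` for `x ≠ a`;
(2) `w(a' ≻ x') = 0` and `w(x' ≻ a') = 0` for `x ≠ b`;
(3) `w(x' ≻ y') = w(x ≻ y) − w(x ≻ a)·w(b ≻ y)` for `x ≠ b`, `y ≠ a` in the
consecutive dimensions of `b` and `a`. -/
theorem basis_change_weights (C : BasedComplex R) (a b : C.B)
    (hdim : C.dim b = C.dim a + 1) (hw : C.w b a = 1)
    (v : Module.Basis C.B R (C.B →₀ R))
    (hva : v a = C.bd (Finsupp.single b 1))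
    (hvb : v b = Finsupp.single b 1)
    (hvx : ∀ x : C.B, x ≠ a → x ≠ b →
      v x = Finsupp.single x 1 - C.w x a • Finsupp.single b 1) :
    (∀ x : C.B, x ≠ a → C.dim x = C.dim b + 1 → v.repr (C.bd (v x)) b = 0) ∧
    (∀ x : C.B, x ≠ a → C.dim x = C.dim b - 1 → v.repr (C.bd (v b)) x = 0) ∧
    (∀ x : C.B, x ≠ b → C.dim x = C.dim a - 1 → v.repr (C.bd (v a)) x = 0) ∧
    (∀ x : C.B, x ≠ b → C.dim x = C.dim a + 1 → v.repr (C.bd (v x)) a = 0) ∧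
    (∀ x y : C.B, x ≠ b → y ≠ a → C.dim x = C.dim b → C.dim y = C.dim a →
      v.repr (C.bd (v x)) y = C.w x y - C.w x a * C.w b y) := by
  have hv : C.IsBasisChangeAt a b v := ⟨hva, hvb, hvx⟩
  have hab : a ≠ b := by rintro rfl; omega
  have bd_apply_fst : ∀ x, x ≠ b → C.bd (v x) a = 0 := fun x hxb => by
    rw [← hv.repr_apply_snd hw hab, v.repr_self, Finsupp.single_eq_of_ne (Ne.symm hxb)]
  refine ⟨fun x _ _ => ?_, fun x hxa _ => ?_, fun x _ _ => ?_, fun x hxb _ => ?_,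
    fun x y hxb hya hx hy => ?_⟩
  · rw [hv.repr_apply_snd hw hab, C.bd_bd, Finsupp.coe_zero, Pi.zero_apply]
  · rw [hvb, ← hva, v.repr_self, Finsupp.single_eq_of_ne hxa]
  · rw [hva, C.bd_bd, map_zero, Finsupp.coe_zero, Pi.zero_apply]
  · rw [hv.repr_apply_fst hw hab, bd_apply_fst x hxb]
  · have hxa : x ≠ a := by rintro rfl; omega
    have hyb : y ≠ b := by rintro rfl; omega
    rw [hv.repr_apply_of_ne hw hab hya hyb, bd_apply_fst x hxb, mul_zero, sub_zero,
      hvx x hxa hxb, map_sub, map_smul, Finsupp.sub_apply, Finsupp.smul_apply,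
      C.bd_single_apply, C.bd_single_apply, smul_eq_mul]
    ring
end

section
/- Following an alternating cycle d(b₁) ≺ b₁ ≻ d(b₂) ≺ ... ≺ bₙ ≻ d(b₁) left to right strictly decreases position in any linear extension L in which u(a) directly follows a: each step up (d(bᵢ) ≺ bᵢ) is followed by a step down of at least two positions, yielding a contradiction; hence no such cycle exists when such a linear extension exists. -/
/-! Along an alternating cycle, the position in `ι` of the lower element `d(bᵢ)` strictly
decreases from one matched pair to the next: `d(bᵢ₊₁) < bᵢ` forces `d(bᵢ₊₁)` strictly before
`bᵢ`, which sits directly after `d(bᵢ)`, and `d(bᵢ₊₁) ≠ d(bᵢ)`. A finite cycle cannot strictly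
decrease all the way round. -/

theorem not_forall_lt_comp_of_finite {ι β : Type*} [Finite ι] [Nonempty ι] [LinearOrder β]
    (f : ι → β) (σ : ι → ι) : ¬ ∀ i, f (σ i) < f i := fun h ↦
  let ⟨i, hi⟩ := Finite.exists_min f
  (h i).not_ge (hi (σ i))

theorem Monotone.lt_of_lt_of_eq_succ {α : Type*} [PartialOrder α] {pos : α → ℕ}
    (hmono : Monotone pos) (hinj : Function.Injective pos) {a b c : α}
    (hc : pos c = pos a + 1) (hbc : b < c) (hba : b ≠ a) : pos b < pos a := by
  have hlt : pos b < pos c := (hmono hbc.le).lt_of_ne (hinj.ne hbc.ne)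
  exact (Nat.lt_add_one_iff.mp (hc ▸ hlt)).lt_of_ne (hinj.ne hba)

theorem no_cycle_of_adjacent_linear_extension_general {α : Type} [Fintype α]
    [PartialOrder α]
    (M : Finset (α × α)) (hM : PosetMatching M)
    (ι : α ≃ Fin (Fintype.card α)) (hlin : IsLinearExtension ι)
    (hadj : ∀ p ∈ M, (ι p.2 : ℕ) = (ι p.1 : ℕ) + 1) :
    ¬ PosetHasAltCycle M := by
  rintro ⟨n, f, hinj, hmem, hcov⟩
  refine not_forall_lt_comp_of_finite (fun i ↦ (ι (f i).1 : ℕ)) (· + 1) fun i ↦ ?_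
  have hsucc : f (i + 1) ≠ f i := hinj.ne (add_ne_left.mpr one_ne_zero)
  have hfst : (f (i + 1)).1 ≠ (f i).1 := (hM.2 _ (hmem _) _ (hmem i) hsucc).1
  have hmono : Monotone fun a ↦ (ι a : ℕ) := fun x y hxy ↦ hlin x y hxy
  exact hmono.lt_of_lt_of_eq_succ (Fin.val_injective.comp ι.injective) (hadj _ (hmem i))
    (hcov i).lt hfst

/-- If there is a linear extension in which each `u(a)` directly follows `a`, then
following an alternating cycle strictly decreases position in the extension (each step
up is followed by a step at least two positions down), a contradiction: no alternating
cycle exists. -/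
theorem no_cycle_of_adjacent_linear_extension {α : Type} [Fintype α] [DecidableEq α]
    [PartialOrder α] (rk : α → ℕ) (hrk : ∀ a b : α, a ⋖ b → rk b = rk a + 1)
    (M : Finset (α × α)) (hM : PosetMatching M)
    (ι : α ≃ Fin (Fintype.card α)) (hlin : IsLinearExtension ι)
    (hadj : ∀ p ∈ M, (ι p.2 : ℕ) = (ι p.1 : ℕ) + 1) :
    ¬ PosetHasAltCycle M :=
  no_cycle_of_adjacent_linear_extension_general M hM ι hlin hadj
end
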